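/- Let ∼ be an equivalence relation on traces, let C₁, C₂ be channels from finite sets X₁, X₂ to finite trace sets Y₁, Y₂ respectively, let π be a prior on X₁×X₂, let S be a ∼-blind scheduler on Y₁, Y₂ that is moreover deterministic (each S(y₁,y₂) is a point mass), let Obs be a deterministic ∼-observer on Int(Y₁,Y₂) with views the ∼-classes, and let Obs× be the deterministic observer on Y₁×Y₂ mapping each pair (y₁,y₂) to the pair of ∼-classes ([y₁]∼, [y₂]∼). Then the observed leakages of the scheduled and parallel compositions coincide: I(π, Comp_S(C₁,C₂)·Obs) = I(π, (C₁×C₂)·Obs×) and L(π, Comp_S(C₁,C₂)·Obs) = L(π, (C₁×C₂)·Obs×). -/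
import Mathlib


open scoped Classical BigOperators

noncomputable section

/-- A (row-stochastic) channel matrix whose outputs range over a finite set `Ys`. -/
def FIsChannel {X B : Type*} (Ys : Finset B) (C : X → B → ℝ) : Prop :=
  (∀ x y, 0 ≤ C x y) ∧ ∀ x, ∑ y ∈ Ys, C x y = 1

/-- A prior (probability distribution). -/
def IsPrior {X : Type*} [Fintype X] (π : X → ℝ) : Prop :=
  (∀ x, 0 ≤ π x) ∧ ∑ x, π x = 1

/-- Cascade composition of channels (matrix product), outputs of the first ranging
over the finite set `Ys`. -/
def Fcascade {X B Z : Type*} (Ys : Finset B) (C : X → B → ℝ) (D : B → Z → ℝ) :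
    X → Z → ℝ :=
  fun x z => ∑ y ∈ Ys, C x y * D y z

/-- Mutual information (base-2), with `0`-probability terms taken to be `0`. -/
def FMI {X B : Type*} [Fintype X] (π : X → ℝ) (Ys : Finset B) (C : X → B → ℝ) : ℝ :=
  ∑ x, ∑ y ∈ Ys, if π x * C x y = 0 then 0
    else π x * C x y * Real.logb 2 (C x y / ∑ x', π x' * C x' y)

/-- Prior vulnerability. -/
def Vprior {X : Type*} [Fintype X] [Nonempty X] (π : X → ℝ) : ℝ :=
  Finset.univ.sup' Finset.univ_nonempty π

/-- Posterior vulnerability. -/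
def FVpost {X B : Type*} [Fintype X] [Nonempty X]
    (π : X → ℝ) (Ys : Finset B) (C : X → B → ℝ) : ℝ :=
  ∑ y ∈ Ys, Finset.univ.sup' Finset.univ_nonempty (fun x => π x * C x y)

/-- Min-entropy leakage. -/
def FMEL {X B : Type*} [Fintype X] [Nonempty X]
    (π : X → ℝ) (Ys : Finset B) (C : X → B → ℝ) : ℝ :=
  Real.logb 2 (FVpost π Ys C) - Real.logb 2 (Vprior π)

/-- Min-capacity: supremum of min-entropy leakage over all priors. -/
def FMinCap {X B : Type*} [Fintype X] [Nonempty X] (Ys : Finset B) (C : X → B → ℝ) : ℝ :=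
  sSup {l : ℝ | ∃ π : X → ℝ, IsPrior π ∧ l = FMEL π Ys C}

/-- All interleavings (shuffles) of two traces. -/
def interleavings {A : Type*} : List A → List A → List (List A)
  | [], ys => [ys]
  | x :: xs, [] => [x :: xs]
  | x :: xs, y :: ys =>
      ((interleavings xs (y :: ys)).map (x :: ·)) ++
        ((interleavings (x :: xs) ys).map (y :: ·))
termination_by l₁ l₂ => l₁.length + l₂.length

/-- The interleaving `Int(y₁, y₂)` of two traces, as a finite set. -/
def IntF {A : Type*} [DecidableEq A] (y₁ y₂ : List A) : Finset (List A) :=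
  (interleavings y₁ y₂).toFinset

/-- The interleaving `Int(Y₁, Y₂)` of two finite sets of traces. -/
def IntSet {A : Type*} [DecidableEq A] (Y₁ Y₂ : Finset (List A)) : Finset (List A) :=
  Y₁.biUnion fun y₁ => Y₂.biUnion fun y₂ => IntF y₁ y₂

/-- A scheduler on `Y₁`, `Y₂`: for each pair of traces it yields a probability
distribution supported on their interleavings. -/
def IsScheduler {A : Type*} [DecidableEq A] (Y₁ Y₂ : Finset (List A))
    (S : List A → List A → List A → ℝ) : Prop :=
  ∀ y₁ ∈ Y₁, ∀ y₂ ∈ Y₂,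
    (∀ y, 0 ≤ S y₁ y₂ y) ∧ (∀ y, y ∉ IntF y₁ y₂ → S y₁ y₂ y = 0) ∧
      ∑ y ∈ IntF y₁ y₂, S y₁ y₂ y = 1

/-- The scheduled composition of two channels with respect to a scheduler. -/
def Comp {A X₁ X₂ : Type*} (Y₁ Y₂ : Finset (List A))
    (C₁ : X₁ → List A → ℝ) (C₂ : X₂ → List A → ℝ)
    (S : List A → List A → List A → ℝ) : X₁ × X₂ → List A → ℝ :=
  fun x y => ∑ y₁ ∈ Y₁, ∑ y₂ ∈ Y₂, C₁ x.1 y₁ * C₂ x.2 y₂ * S y₁ y₂ y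

/-- The (disjoint) parallel composition of two channels. -/
def Par {A X₁ X₂ : Type*} (C₁ : X₁ → List A → ℝ) (C₂ : X₂ → List A → ℝ) :
    X₁ × X₂ → List A × List A → ℝ :=
  fun x y => C₁ x.1 y.1 * C₂ x.2 y.2

/-- A `∼`-blind scheduler: two pairs of component traces are componentwise
`∼`-equivalent iff the scheduled output distributions are
`∼`-indistinguishable. -/
def SimBlind {A : Type*} [DecidableEq A] (r : List A → List A → Prop)
    (Y₁ Y₂ : Finset (List A)) (S : List A → List A → List A → ℝ) : Prop :=
  ∀ y₁ ∈ Y₁, ∀ y₂ ∈ Y₂, ∀ y₁' ∈ Y₁, ∀ y₂' ∈ Y₂,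
    ((r y₁ y₁' ∧ r y₂ y₂') ↔
      ∀ t : List A,
        ∑ y ∈ (IntSet Y₁ Y₂).filter (fun y => r y t), S y₁ y₂ y =
          ∑ y ∈ (IntSet Y₁ Y₂).filter (fun y => r y t), S y₁' y₂' y)

/-- The deterministic `∼`-observer on traces, with views the `∼`-classes. -/
def detObs {A : Type*} (s : Setoid (List A)) : List A → Quotient s → ℝ :=
  fun y z => if z = Quotient.mk s y then 1 else 0

/-- The deterministic observer on pairs of traces mapping each pair to its pair
of `∼`-classes. -/
def detObsPair {A : Type*} (s : Setoid (List A)) :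
    List A × List A → Quotient s × Quotient s → ℝ :=
  fun p q => if q = (Quotient.mk s p.1, Quotient.mk s p.2) then 1 else 0


private lemma reindex_leakage {X B B' : Type*} [Fintype X] [Nonempty X]
    (π : X → ℝ) (Zd : Finset B) (Q : Finset B')
    (D : X → B → ℝ) (E : X → B' → ℝ) (f : B' → B)
    (h1 : ∀ q ∈ Q, f q ∈ Zd)
    (h2 : ∀ q ∈ Q, ∀ q' ∈ Q, f q = f q' → q = q')
    (h3 : ∀ q ∈ Q, ∀ x, E x q = D x (f q))
    (h4 : ∀ z ∈ Zd, (∀ q ∈ Q, f q ≠ z) → ∀ x, D x z = 0) :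
    FMI π Zd D = FMI π Q E ∧ FMEL π Zd D = FMEL π Q E := by
  have hsub : Q.image f ⊆ Zd := by
    intro z hz
    obtain ⟨q, hq, rfl⟩ := Finset.mem_image.mp hz
    exact h1 q hq
  have h4' : ∀ z ∈ Zd, z ∉ Q.image f → ∀ x, D x z = 0 := by
    intro z hz hz' x
    refine h4 z hz (fun q hq hne => hz' ?_) x
    exact Finset.mem_image.mpr ⟨q, hq, hne⟩
  have hVpost : FVpost π Zd D = FVpost π Q E := by
    unfold FVpost
    rw [← Finset.sum_subset hsub (by
      intro z hz hz'
      simp [h4' z hz hz', Finset.sup'_const])]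
    rw [Finset.sum_image h2]
    refine Finset.sum_congr rfl fun q hq => ?_
    simp only [h3 q hq]
  refine ⟨?_, by unfold FMEL; rw [hVpost]⟩
  unfold FMI
  refine Finset.sum_congr rfl fun x _ => ?_
  rw [← Finset.sum_subset hsub (by
    intro z hz hz'
    simp [h4' z hz hz'])]
  rw [Finset.sum_image h2]
  refine Finset.sum_congr rfl fun q hq => ?_
  have hq3 : ∀ x', D x' (f q) = E x' q := fun x' => (h3 q hq x').symm
  simp only [hq3]

/-- Auxiliary map sending a pair of `∼`-classes (of traces in `Y₁ × Y₂`) to the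
class of the scheduled output. -/
private noncomputable def schedF {A : Type*} [DecidableEq A] (s : Setoid (List A))
    (Y₁ Y₂ : Finset (List A)) (σ : List A → List A → List A) :
    Quotient s × Quotient s → Quotient s :=
  fun q =>
    if h : ∃ p : List A × List A, p ∈ Y₁ ×ˢ Y₂ ∧
        (Quotient.mk s p.1, Quotient.mk s p.2) = q
    then Quotient.mk s (σ h.choose.1 h.choose.2)
    else Quotient.mk s []

/-- under a deterministic `∼`-blind scheduler, the observed mutual
information and min-entropy leakage of the scheduled composition (under the
deterministic `∼`-observer) equal those of the parallel composition (under the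
componentwise `∼`-class observer). -/
theorem det_blind_scheduler_observed_leakage_eq_parallel
    {A X₁ X₂ : Type*} [DecidableEq A] [Fintype X₁] [Fintype X₂]
    [Nonempty X₁] [Nonempty X₂]
    (s : Setoid (List A))
    (Y₁ Y₂ : Finset (List A))
    (C₁ : X₁ → List A → ℝ) (C₂ : X₂ → List A → ℝ)
    (hC₁ : FIsChannel Y₁ C₁) (hC₂ : FIsChannel Y₂ C₂)
    (π : X₁ × X₂ → ℝ) (hπ : IsPrior π)
    (S : List A → List A → List A → ℝ) (hS : IsScheduler Y₁ Y₂ S)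
    (hblind : SimBlind (fun a b => s.r a b) Y₁ Y₂ S)
    (hdet : ∀ y₁ ∈ Y₁, ∀ y₂ ∈ Y₂, ∃ y, S y₁ y₂ y = 1 ∧ ∀ y', y' ≠ y → S y₁ y₂ y' = 0) :
    FMI π ((IntSet Y₁ Y₂).image (Quotient.mk s))
        (Fcascade (IntSet Y₁ Y₂) (Comp Y₁ Y₂ C₁ C₂ S) (detObs s)) =
      FMI π ((Y₁ ×ˢ Y₂).image (fun p => (Quotient.mk s p.1, Quotient.mk s p.2)))
        (Fcascade (Y₁ ×ˢ Y₂) (Par C₁ C₂) (detObsPair s)) ∧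
    FMEL π ((IntSet Y₁ Y₂).image (Quotient.mk s))
        (Fcascade (IntSet Y₁ Y₂) (Comp Y₁ Y₂ C₁ C₂ S) (detObs s)) =
      FMEL π ((Y₁ ×ˢ Y₂).image (fun p => (Quotient.mk s p.1, Quotient.mk s p.2)))
        (Fcascade (Y₁ ×ˢ Y₂) (Par C₁ C₂) (detObsPair s))  := by
  classical
  choose! σ hσ1 hσ2 using hdet
  have hσF : ∀ a ∈ Y₁, ∀ b ∈ Y₂, σ a b ∈ IntF a b := by
    intro a ha b hb
    by_contra hmem
    have h0 := (hS a ha b hb).2.1 _ hmem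
    rw [hσ1 a ha b hb] at h0
    norm_num at h0
  have hσmem : ∀ a ∈ Y₁, ∀ b ∈ Y₂, σ a b ∈ IntSet Y₁ Y₂ := fun a ha b hb =>
    Finset.mem_biUnion.mpr ⟨a, ha, Finset.mem_biUnion.mpr ⟨b, hb, hσF a ha b hb⟩⟩
  have hsum : ∀ a ∈ Y₁, ∀ b ∈ Y₂, ∀ t,
      (∑ y ∈ (IntSet Y₁ Y₂).filter (fun y => s.r y t), S a b y)
        = if s.r (σ a b) t then 1 else 0 := by
    intro a ha b hb t
    by_cases h : s.r (σ a b) t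
    · rw [if_pos h]
      have hmemf : σ a b ∈ (IntSet Y₁ Y₂).filter (fun y => s.r y t) :=
        Finset.mem_filter.mpr ⟨hσmem a ha b hb, h⟩
      rw [Finset.sum_eq_single_of_mem (σ a b) hmemf
        (fun y _ hy => hσ2 a ha b hb y hy)]
      exact hσ1 a ha b hb
    · rw [if_neg h]
      apply Finset.sum_eq_zero
      intro y hy
      rcases eq_or_ne y (σ a b) with rfl | hne
      · exact absurd (Finset.mem_filter.mp hy).2 h
      · exact hσ2 a ha b hb y hne
  have hkey : ∀ a ∈ Y₁, ∀ b ∈ Y₂, ∀ a' ∈ Y₁, ∀ b' ∈ Y₂,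
      (s.r a a' ∧ s.r b b') ↔
        Quotient.mk s (σ a b) = Quotient.mk s (σ a' b') := by
    intro a ha b hb a' ha' b' hb'
    rw [hblind a ha b hb a' ha' b' hb']
    constructor
    · intro h
      have h' := h (σ a' b')
      rw [hsum a ha b hb, hsum a' ha' b' hb', if_pos (s.iseqv.refl _)] at h'
      split_ifs at h' with hc
      · exact Quotient.sound hc
      · norm_num at h'
    · intro h t
      rw [hsum a ha b hb, hsum a' ha' b' hb']
      have hr : s.r (σ a b) (σ a' b') := Quotient.exact h
      have hiff : s.r (σ a b) t ↔ s.r (σ a' b') t :=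
        ⟨fun h2 => s.iseqv.trans (s.iseqv.symm hr) h2, fun h2 => s.iseqv.trans hr h2⟩
      rw [if_congr hiff rfl rfl]
  have hf : ∀ a ∈ Y₁, ∀ b ∈ Y₂,
      schedF s Y₁ Y₂ σ (Quotient.mk s a, Quotient.mk s b) = Quotient.mk s (σ a b) := by
    intro a ha b hb
    have hex : ∃ p : List A × List A, p ∈ Y₁ ×ˢ Y₂ ∧
        (Quotient.mk s p.1, Quotient.mk s p.2) = (Quotient.mk s a, Quotient.mk s b) :=
      ⟨(a, b), Finset.mem_product.mpr ⟨ha, hb⟩, rfl⟩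
    simp only [schedF, dif_pos hex]
    obtain ⟨hmem, heq⟩ := hex.choose_spec
    have hp1 : hex.choose.1 ∈ Y₁ := (Finset.mem_product.mp hmem).1
    have hp2 : hex.choose.2 ∈ Y₂ := (Finset.mem_product.mp hmem).2
    have h1 : s.r hex.choose.1 a := Quotient.exact (congrArg Prod.fst heq)
    have h2 : s.r hex.choose.2 b := Quotient.exact (congrArg Prod.snd heq)
    exact (hkey _ hp1 _ hp2 a ha b hb).mp ⟨h1, h2⟩
  have hD : ∀ (x : X₁ × X₂) z,
      Fcascade (IntSet Y₁ Y₂) (Comp Y₁ Y₂ C₁ C₂ S) (detObs s) x z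
        = ∑ a ∈ Y₁, ∑ b ∈ Y₂, C₁ x.1 a * C₂ x.2 b *
            (if z = Quotient.mk s (σ a b) then 1 else 0) := by
    intro x z
    unfold Fcascade Comp detObs
    simp only [Finset.sum_mul]
    rw [Finset.sum_comm]
    refine Finset.sum_congr rfl fun a ha => ?_
    rw [Finset.sum_comm]
    refine Finset.sum_congr rfl fun b hb => ?_
    rw [Finset.sum_eq_single_of_mem (σ a b) (hσmem a ha b hb)
      (fun y _ hy => by rw [hσ2 a ha b hb y hy]; ring)]
    rw [hσ1 a ha b hb]; ring
  have hE : ∀ (x : X₁ × X₂), ∀ a ∈ Y₁, ∀ b ∈ Y₂,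
      Fcascade (Y₁ ×ˢ Y₂) (Par C₁ C₂) (detObsPair s) x
          (Quotient.mk s a, Quotient.mk s b)
        = ∑ a' ∈ Y₁, ∑ b' ∈ Y₂, C₁ x.1 a' * C₂ x.2 b' *
            (if Quotient.mk s (σ a b) = Quotient.mk s (σ a' b') then 1 else 0) := by
    intro x a ha b hb
    unfold Fcascade Par detObsPair
    rw [Finset.sum_product]
    refine Finset.sum_congr rfl fun a' ha' => Finset.sum_congr rfl fun b' hb' => ?_
    congr 1
    have hiff : ((Quotient.mk s a, Quotient.mk s b)
          = (Quotient.mk s a', Quotient.mk s b'))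
        ↔ (Quotient.mk s (σ a b) = Quotient.mk s (σ a' b')) := by
      rw [Prod.mk.injEq, ← hkey a ha b hb a' ha' b' hb']
      exact and_congr ⟨Quotient.exact, Quotient.sound⟩ ⟨Quotient.exact, Quotient.sound⟩
    rw [if_congr hiff rfl rfl]
  have h1 : ∀ q ∈ (Y₁ ×ˢ Y₂).image (fun p => (Quotient.mk s p.1, Quotient.mk s p.2)),
      schedF s Y₁ Y₂ σ q ∈ (IntSet Y₁ Y₂).image (Quotient.mk s) := by
    intro q hq
    obtain ⟨p, hp, rfl⟩ := Finset.mem_image.mp hq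
    have hp1 := (Finset.mem_product.mp hp).1
    have hp2 := (Finset.mem_product.mp hp).2
    rw [hf p.1 hp1 p.2 hp2]
    exact Finset.mem_image_of_mem _ (hσmem p.1 hp1 p.2 hp2)
  have h2 : ∀ q ∈ (Y₁ ×ˢ Y₂).image (fun p => (Quotient.mk s p.1, Quotient.mk s p.2)),
      ∀ q' ∈ (Y₁ ×ˢ Y₂).image (fun p => (Quotient.mk s p.1, Quotient.mk s p.2)),
        schedF s Y₁ Y₂ σ q = schedF s Y₁ Y₂ σ q' → q = q' := by
    intro q hq q' hq' heq
    obtain ⟨p, hp, rfl⟩ := Finset.mem_image.mp hq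
    obtain ⟨p', hp', rfl⟩ := Finset.mem_image.mp hq'
    have hp1 := (Finset.mem_product.mp hp).1
    have hp2 := (Finset.mem_product.mp hp).2
    have hp1' := (Finset.mem_product.mp hp').1
    have hp2' := (Finset.mem_product.mp hp').2
    rw [hf p.1 hp1 p.2 hp2, hf p'.1 hp1' p'.2 hp2'] at heq
    obtain ⟨hr1, hr2⟩ := (hkey p.1 hp1 p.2 hp2 p'.1 hp1' p'.2 hp2').mpr heq
    exact Prod.ext (Quotient.sound hr1) (Quotient.sound hr2)
  have h3 : ∀ q ∈ (Y₁ ×ˢ Y₂).image (fun p => (Quotient.mk s p.1, Quotient.mk s p.2)),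
      ∀ x : X₁ × X₂,
        Fcascade (Y₁ ×ˢ Y₂) (Par C₁ C₂) (detObsPair s) x q
          = Fcascade (IntSet Y₁ Y₂) (Comp Y₁ Y₂ C₁ C₂ S) (detObs s) x
              (schedF s Y₁ Y₂ σ q) := by
    intro q hq x
    obtain ⟨p, hp, rfl⟩ := Finset.mem_image.mp hq
    have hp1 := (Finset.mem_product.mp hp).1
    have hp2 := (Finset.mem_product.mp hp).2
    rw [hf p.1 hp1 p.2 hp2, hD, hE x p.1 hp1 p.2 hp2]
  have h4 : ∀ z ∈ (IntSet Y₁ Y₂).image (Quotient.mk s),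
      (∀ q ∈ (Y₁ ×ˢ Y₂).image (fun p => (Quotient.mk s p.1, Quotient.mk s p.2)),
        schedF s Y₁ Y₂ σ q ≠ z) →
      ∀ x : X₁ × X₂,
        Fcascade (IntSet Y₁ Y₂) (Comp Y₁ Y₂ C₁ C₂ S) (detObs s) x z = 0 := by
    intro z _ hz x
    rw [hD]
    refine Finset.sum_eq_zero fun a ha => Finset.sum_eq_zero fun b hb => ?_
    rw [if_neg, mul_zero]
    intro hcond
    refine hz (Quotient.mk s a, Quotient.mk s b)
      (Finset.mem_image.mpr ⟨(a, b), Finset.mem_product.mpr ⟨ha, hb⟩, rfl⟩) ?_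
    rw [hf a ha b hb, hcond]
  exact reindex_leakage π _ _ _ _ (schedF s Y₁ Y₂ σ) h1 h2 h3 h4
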